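/- For every nonzero complex number x and natural number n, the sum over k from 0 to n of 2^k * L_k(x) / x^k equals 2^(n+1) * F_{n+1}(x) / x^n, where F_n(x) and L_n(x) are the Fibonacci and Lucas polynomials. -/
import Mathlib


open Finset

noncomputable def fibP (y : ℂ) : ℕ → ℂ
  | 0 => 0
  | 1 => 1
  | n + 2 => y * fibP y (n + 1) + fibP y n

noncomputable def lucasP (y : ℂ) : ℕ → ℂ
  | 0 => 2
  | 1 => y
  | n + 2 => y * lucasP y (n + 1) + lucasP y n

lemma lucas_eq_fib (x : ℂ) : ∀ n, lucasP x (n + 1) = fibP x n + fibP x (n + 2) := by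
  intro n
  induction n using Nat.twoStepInduction with
  | zero => simp [fibP, lucasP]
  | one => simp [fibP, lucasP]; ring
  | more n ih1 ih2 =>
    show lucasP x (n + 1 + 2) = fibP x (n + 2) + fibP x (n + 2 + 2)
    rw [lucasP, ih1, ih2,
      show fibP x (n + 1 + 2) = x * fibP x (n + 2) + fibP x (n + 1) from rfl,
      show fibP x (n + 2 + 2) = x * (x * fibP x (n + 2) + fibP x (n + 1)) + fibP x (n + 2)
        from rfl]
    simp only [show fibP x (n + 2) = x * fibP x (n + 1) + fibP x n from rfl]
    ring

theorem stmt13 (x : ℂ) (hx : x ≠ 0) (n : ℕ) :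
    ∑ k ∈ Finset.range (n + 1), 2 ^ k * lucasP x k / x ^ k =
      2 ^ (n + 1) * fibP x (n + 1) / x ^ n := by
  induction n with
  | zero => simp [fibP, lucasP]
  | succ n ih =>
    rw [Finset.sum_range_succ, ih, lucas_eq_fib, fibP]
    field_simp
    ring
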